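/- With μ_n(ψ) as defined for the arc transform with fixed half-length ψ ∈ [0, π], for odd n = 2m-1 one has lim_{m→∞} ((4m-1)/4) μ_{2m-1}(ψ)² = 4πψ for ψ ∈ [0, π/2] and = 4π² - 4πψ for ψ ∈ [π/2, π], with uniform convergence in ψ. -/

import Mathlib

open Real Finset Filter

/-- The square `|P̃_n^j(0)|²` of the normalized associated Legendre function at zero,
for integer order `j` with `|j| ≤ n`. -/
noncomputable def ptildeSqZ (n : ℕ) (j : ℤ) : ℝ :=
  if Even ((n : ℤ) + j) then
    (2 * n + 1) / (4 * Real.pi) *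
      ((Nat.doubleFactorial (n - j.natAbs - 1) * Nat.doubleFactorial (n + j.natAbs - 1) : ℝ) /
        (Nat.doubleFactorial (n - j.natAbs) * Nat.doubleFactorial (n + j.natAbs) : ℝ))
  else 0

/-- The function `s_j(ψ)`: `2ψ` for `j = 0` and `2 sin(jψ)/j` otherwise. -/
noncomputable def sArc (j : ℤ) (ψ : ℝ) : ℝ :=
  if j = 0 then 2 * ψ else 2 * Real.sin (j * ψ) / j

/-- The squared singular values `μ_n(ψ)²` of the arc transform with fixed half-length `ψ`. -/
noncomputable def muSq (n : ℕ) (ψ : ℝ) : ℝ :=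
  8 * Real.pi ^ 2 / (2 * n + 1) *
    ∑ j ∈ Finset.Icc (-(n : ℤ)) (n : ℤ), ptildeSqZ n j * sArc j ψ ^ 2

/-! For `n = 2m - 1` only the odd orders `j = ±(2k+1)` contribute, and the sum collapses to
`((4m-1)/4) μ_{2m-1}(ψ)² = ∑_{k<m} 16 c_{m,k} sin²((2k+1)ψ)/(2k+1)²` with
`c_{m,k} = π² |P̃_{2m-1}^{2k+1}(0)|² = π (4m-1)/4 · w_{m-1-k} w_{m+k}`, where
`w_n = (2n-1)!!/(2n)!!`. Wallis' product, in the form `π (n + 1/2) w_n² → 1` with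
`π (n + 1/2) w_n² ≤ 2`, gives `c_{m,k} → 1` for each `k` and `c_{m,k}² ≤ 8(k+1)`; the
latter makes `|c_{m,k} - 1|/(2k+1)²` dominated by a summable sequence, so by Tannery's
theorem the partial sums converge, uniformly in `ψ`, to `16 ∑_k sin²((2k+1)ψ)/(2k+1)²`.
That series is the Fourier series of the triangle wave, which follows from the
Bernoulli-polynomial formula for `∑ cos(nx)/n²`. -/

open Topology

theorem tendstoUniformly_tsum_mul_of_tendsto_one {α : Type*} {a : ℕ → ℕ → ℝ}
    {u : ℕ → α → ℝ} {A M : ℕ → ℝ} (hM : Summable M)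
    (hAM : Summable fun k => A k * M k) (hM0 : ∀ k, 0 ≤ M k) (hu : ∀ k x, |u k x| ≤ M k)
    (haA : ∀ m k, |a m k| ≤ A k)
    (ha : ∀ k, Tendsto (fun m => a m k) atTop (𝓝 1)) :
    TendstoUniformly (fun m x => ∑' k, a m k * u k x) (fun x => ∑' k, u k x) atTop := by
  have hdom (m k : ℕ) : |1 - a m k| * M k ≤ A k * M k + M k := by
    rw [← add_one_mul]
    gcongr
    · exact hM0 k
    · exact (abs_sub _ _).trans (by rw [abs_one, add_comm]; gcongr; exact haA m k)
  have herr : Tendsto (fun m => ∑' k, |1 - a m k| * M k) atTop (𝓝 0) := by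
    simpa using tendsto_tsum_of_dominated_convergence (hAM.add hM)
      (f := fun m k => |1 - a m k| * M k) (g := fun _ => 0)
      (fun k => by simpa using ((ha k).const_sub 1).abs.mul_const (M k))
      (.of_forall fun m k => by
        rw [Real.norm_of_nonneg (mul_nonneg (abs_nonneg _) (hM0 k))]; exact hdom m k)
  rw [Metric.tendstoUniformly_iff]
  intro ε hε
  filter_upwards [herr.eventually_lt_const hε] with m hm x
  have hux : Summable fun k => u k x := hM.of_norm_bounded (hu · x)
  have haux : Summable fun k => a m k * u k x :=
    hAM.of_norm_bounded fun k => by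
      rw [Real.norm_eq_abs, abs_mul]
      exact mul_le_mul (haA m k) (hu k x) (abs_nonneg _) ((abs_nonneg _).trans (haA m k))
  have hsum_err : Summable fun k => |1 - a m k| * M k :=
    (hAM.add hM).of_nonneg_of_le (fun k => mul_nonneg (abs_nonneg _) (hM0 k)) (hdom m)
  calc dist (∑' k, u k x) (∑' k, a m k * u k x)
      = ‖∑' k, (1 - a m k) * u k x‖ := by
        simp_rw [dist_eq_norm, ← hux.tsum_sub haux, sub_mul, one_mul]
    _ ≤ ∑' k, |1 - a m k| * M k := tsum_of_norm_bounded hsum_err.hasSum fun k => by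
        rw [norm_mul, Real.norm_eq_abs, Real.norm_eq_abs]
        exact mul_le_mul_of_nonneg_left (hu k x) (abs_nonneg _)
    _ < ε := hm

theorem tendsto_natCast_add_div_add (α β : ℝ) :
    Tendsto (fun n : ℕ => ((n : ℝ) + α) / (n + β)) atTop (𝓝 1) := by
  have h := (tendsto_natCast_div_add_atTop β).add ((tendsto_const_nhds (x := α)).div_atTop
    (tendsto_atTop_add_const_right _ β tendsto_natCast_atTop_atTop))
  simpa [add_div] using h

theorem sum_Icc_neg_of_even {M : Type*} [AddCommMonoid M] {f : ℤ → M} (hf : Function.Even f)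
    (n : ℕ) : ∑ j ∈ Icc (-(n : ℤ)) n, f j = f 0 + 2 • ∑ i ∈ range n, f (i + 1) := by
  induction n with
  | zero => simp
  | succ n ih =>
    have hIcc : Icc (-((n + 1 : ℕ) : ℤ)) (n + 1 : ℕ) =
        insert (-((n : ℤ) + 1)) (insert ((n : ℤ) + 1) (Icc (-(n : ℤ)) n)) := by
      ext j; simp only [mem_Icc, mem_insert]; omega
    rw [hIcc, sum_insert (by simp; omega), sum_insert (by simp), ih, sum_range_succ, hf, smul_add,
      two_nsmul (f _)]
    abel

theorem sum_range_two_mul_of_odd_eq_zero {M : Type*} [AddCommMonoid M] {g : ℕ → M}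
    (hg : ∀ i, Odd i → g i = 0) (m : ℕ) :
    ∑ i ∈ range (2 * m), g i = ∑ k ∈ range m, g (2 * k) := by
  induction m with
  | zero => simp
  | succ m ih =>
    rw [mul_add, mul_one, sum_range_succ, sum_range_succ, ih, hg _ (odd_two_mul_add_one m),
      add_zero, sum_range_succ]

theorem hasSum_cos_mul_div_sq {x : ℝ} (hx : x ∈ Set.Icc 0 (2 * π)) :
    HasSum (fun n : ℕ => cos (n * x) / n ^ 2) (π ^ 2 / 6 - π * x / 2 + x ^ 2 / 4) := by
  have ht : x / (2 * π) ∈ Set.Icc (0 : ℝ) 1 := by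
    constructor
    · exact div_nonneg hx.1 (by positivity)
    · rw [div_le_one (by positivity)]; exact hx.2
  have h := hasSum_one_div_nat_pow_mul_cos one_ne_zero ht
  rw [← bernoulliFun, mul_one, bernoulliFun_two] at h
  convert h using 1
  · ext n
    rw [one_div_mul_eq_div]
    congr 2
    field_simp
  · field_simp
    norm_num [Nat.factorial]
    ring

theorem hasSum_cos_odd_mul_div_sq {x : ℝ} (hx : x ∈ Set.Icc 0 π) :
    HasSum (fun k : ℕ => cos ((2 * k + 1) * x) / (2 * k + 1) ^ 2) (π * (π - 2 * x) / 8) := by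
  set f : ℕ → ℝ := fun n => cos (n * x) / n ^ 2 with hf
  have hfull : HasSum f (π ^ 2 / 6 - π * x / 2 + x ^ 2 / 4) :=
    hasSum_cos_mul_div_sq ⟨hx.1, by linarith [hx.2, pi_pos]⟩
  have heven :
      HasSum (fun k => f (2 * k)) ((π ^ 2 / 6 - π * (2 * x) / 2 + (2 * x) ^ 2 / 4) / 4) := by
    have e : (fun k => f (2 * k)) = fun k : ℕ => cos (k * (2 * x)) / k ^ 2 / 4 := by
      ext k
      simp only [hf]
      push_cast
      ring_nf
    rw [e]
    exact (hasSum_cos_mul_div_sq ⟨by linarith [hx.1], by linarith [hx.2]⟩).div_const 4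
  have hodd : Summable fun k => f (2 * k + 1) :=
    hfull.summable.comp_injective (i := fun k => 2 * k + 1) fun a b h => by simpa using h
  have hsum := hfull.unique (heven.even_add_odd hodd.hasSum)
  have e : (fun k : ℕ => cos ((2 * k + 1) * x) / (2 * k + 1) ^ 2) = fun k => f (2 * k + 1) := by
    ext k
    simp only [hf]
    push_cast
    rfl
  rw [e, show π * (π - 2 * x) / 8 = ∑' k, f (2 * k + 1) by linear_combination hsum]
  exact hodd.hasSum

theorem hasSum_sin_odd_sq {ψ : ℝ} (hψ : ψ ∈ Set.Icc 0 π) :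
    HasSum (fun k : ℕ => 16 * sin ((2 * k + 1) * ψ) ^ 2 / (2 * k + 1) ^ 2)
      (if ψ ≤ π / 2 then 4 * π * ψ else 4 * π ^ 2 - 4 * π * ψ) := by
  -- `x` is `2ψ` reduced to `[0, π]` modulo the symmetries of `cos`
  have key : ∀ x ∈ Set.Icc 0 π,
      (∀ k : ℕ, cos ((2 * k + 1) * x) = cos ((2 * k + 1) * (2 * ψ))) →
      HasSum (fun k : ℕ => 16 * sin ((2 * k + 1) * ψ) ^ 2 / (2 * k + 1) ^ 2) (2 * π * x) := by
    intro x hx hcos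
    have h := ((hasSum_cos_odd_mul_div_sq ⟨le_rfl, pi_pos.le⟩).mul_left 8).sub
      ((hasSum_cos_odd_mul_div_sq hx).mul_left 8)
    have e : (fun k : ℕ => 16 * sin ((2 * k + 1) * ψ) ^ 2 / (2 * k + 1) ^ 2) = fun k : ℕ =>
        8 * (cos ((2 * k + 1) * 0) / (2 * k + 1) ^ 2) -
          8 * (cos ((2 * k + 1) * x) / (2 * k + 1) ^ 2) := by
      ext k
      rw [hcos, sin_sq_eq_half_sub, mul_zero, cos_zero]
      ring_nf
    rw [e, show 2 * π * x = 8 * (π * (π - 2 * 0) / 8) - 8 * (π * (π - 2 * x) / 8) by ring]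
    exact h
  split_ifs with h
  · convert key (2 * ψ) ⟨by linarith [hψ.1], by linarith⟩ (fun k => rfl) using 1
    ring
  · convert key (2 * π - 2 * ψ) ⟨by linarith [hψ.2], by linarith⟩ (fun k => ?_) using 1
    · ring
    · rw [← cos_nat_mul_two_pi_sub _ (2 * k + 1)]
      push_cast
      ring_nf

theorem summable_inv_odd_sq : Summable fun k : ℕ => 16 / (2 * (k : ℝ) + 1) ^ 2 := by
  simpa [div_eq_mul_inv] using
    (hasSum_cos_odd_mul_div_sq ⟨le_rfl, pi_pos.le⟩).summable.mul_left 16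

theorem summable_sqrt_mul_inv_odd_sq :
    Summable fun k : ℕ => √(8 * (k + 1)) * (16 / (2 * (k : ℝ) + 1) ^ 2) := by
  have h := (Real.summable_one_div_nat_add_rpow 1 (3 / 2)).2 (by norm_num)
  refine (h.mul_left (16 * √8)).of_nonneg_of_le (fun k => by positivity) fun k => ?_
  have hx : (0 : ℝ) < k + 1 := by positivity
  have hsq : √((k : ℝ) + 1) ^ 2 = k + 1 := sq_sqrt hx.le
  rw [abs_of_pos hx, show (3 / 2 : ℝ) = 1 + 1 / 2 by norm_num, rpow_add hx, rpow_one,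
    ← sqrt_eq_rpow, sqrt_mul (by norm_num)]
  calc √8 * √((k : ℝ) + 1) * (16 / (2 * k + 1) ^ 2)
      = 16 * √8 * (√((k : ℝ) + 1) / (2 * k + 1) ^ 2) := by ring
    _ ≤ 16 * √8 * (√((k : ℝ) + 1) / (k + 1) ^ 2) := by
        gcongr; nlinarith [(k.cast_nonneg : (0 : ℝ) ≤ k)]
    _ = 16 * √8 * (1 / ((k + 1) * √((k : ℝ) + 1))) := by
        congr 1
        field_simp
        rw [hsq]

noncomputable def wallisRatio (n : ℕ) : ℝ :=
  (Nat.doubleFactorial (2 * n - 1) : ℝ) / Nat.doubleFactorial (2 * n)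

theorem wallisRatio_succ (n : ℕ) :
    wallisRatio (n + 1) = wallisRatio n * ((2 * n + 1) / (2 * n + 2)) := by
  rw [wallisRatio, wallisRatio, show 2 * (n + 1) - 1 = 2 * n + 1 by omega,
    Nat.doubleFactorial_add_one, mul_add, Nat.doubleFactorial_add_two]
  have := Nat.doubleFactorial_pos (2 * n)
  push_cast
  field_simp

open Real.Wallis in
theorem wallisRatio_sq_mul_W (n : ℕ) : (2 * n + 1) * wallisRatio n ^ 2 * W n = 1 := by
  induction n with
  | zero => simp [wallisRatio, W]
  | succ n ih =>
    rw [wallisRatio_succ, W_succ]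
    push_cast
    field_simp
    linear_combination (2 * (n : ℝ) + 3) * ih

open Real.Wallis in
theorem pi_mul_wallisRatio_sq (n : ℕ) : π * (n + 1 / 2) * wallisRatio n ^ 2 = π / 2 / W n := by
  rw [eq_div_iff (W_pos n).ne']
  linear_combination π / 2 * wallisRatio_sq_mul_W n

theorem tendsto_pi_mul_wallisRatio_sq :
    Tendsto (fun n : ℕ => π * (n + 1 / 2) * wallisRatio n ^ 2) atTop (𝓝 1) := by
  simp_rw [pi_mul_wallisRatio_sq]
  have h := (tendsto_const_nhds (x := π / 2)).div Real.Wallis.tendsto_W_nhds_pi_div_two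
    (by positivity : π / 2 ≠ 0)
  rwa [div_self (by positivity)] at h

open Real.Wallis in
theorem pi_mul_wallisRatio_sq_le_two (n : ℕ) : π * (n + 1 / 2) * wallisRatio n ^ 2 ≤ 2 := by
  rw [pi_mul_wallisRatio_sq, div_le_iff₀ (W_pos n)]
  have hhalf : (1 : ℝ) / 2 ≤ (2 * n + 1) / (2 * n + 2) := by
    rw [div_le_div_iff₀ (by positivity) (by positivity)]
    linarith [(n.cast_nonneg : (0 : ℝ) ≤ n)]
  nlinarith [le_W n, pi_pos]

theorem ptildeSqZ_nonneg (n : ℕ) (j : ℤ) : 0 ≤ ptildeSqZ n j := by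
  unfold ptildeSqZ
  split_ifs <;> positivity

theorem ptildeSqZ_neg (n : ℕ) (j : ℤ) : ptildeSqZ n (-j) = ptildeSqZ n j := by
  have : Even ((n : ℤ) + -j) ↔ Even ((n : ℤ) + j) := by
    simp [Int.even_add, even_neg]
  simp only [ptildeSqZ, Int.natAbs_neg, this]

theorem ptildeSqZ_add_sub {a b : ℕ} (hab : a ≤ b) :
    ptildeSqZ (a + b) ((b : ℤ) - a) =
      (2 * ((a : ℝ) + b) + 1) / (4 * π) * (wallisRatio a * wallisRatio b) := by
  have habs : ((b : ℤ) - a).natAbs = b - a := by omega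
  rw [ptildeSqZ, if_pos ⟨b, by push_cast; ring⟩, habs, show a + b - (b - a) = 2 * a by omega,
    show a + b + (b - a) = 2 * b by omega, wallisRatio, wallisRatio]
  push_cast
  ring

theorem pi_sq_mul_ptildeSqZ_odd_sq {m k : ℕ} (hk : k < m) :
    (π ^ 2 * ptildeSqZ (2 * m - 1) (2 * k + 1)) ^ 2 =
      ((m - 1 / 4) / (m - (k + 1 / 2))) * ((m - 1 / 4) / (m + (k + 1 / 2))) *
        (π * ((m - (k + 1) : ℕ) + 1 / 2) * wallisRatio (m - (k + 1)) ^ 2) *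
        (π * ((m + k : ℕ) + 1 / 2) * wallisRatio (m + k) ^ 2) := by
  have h := ptildeSqZ_add_sub (a := m - (k + 1)) (b := m + k) (by omega)
  rw [show m - (k + 1) + (m + k) = 2 * m - 1 by omega,
    show ((m + k : ℕ) : ℤ) - ((m - (k + 1) : ℕ) : ℤ) = 2 * k + 1 by omega] at h
  rw [h, Nat.cast_sub (by omega)]
  have hne : (m : ℝ) - (k + 1 / 2) ≠ 0 := by
    have : (k : ℝ) + 1 ≤ m := by exact_mod_cast hk
    linarith
  push_cast
  rw [show (m : ℝ) - (k + 1) + 1 / 2 = m - (k + 1 / 2) by ring,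
    show (m : ℝ) + k + 1 / 2 = m + (k + 1 / 2) by ring]
  have hcancel (c p q A B : ℝ) (hp : p ≠ 0) (hq : q ≠ 0) :
      c / p * (c / q) * (π * p * A) * (π * q * B) = (c * π) ^ 2 * A * B := by
    field_simp
  rw [hcancel _ _ _ _ _ hne (by positivity)]
  field_simp
  ring

theorem pi_sq_mul_ptildeSqZ_odd_sq_le {m k : ℕ} (hk : k < m) :
    (π ^ 2 * ptildeSqZ (2 * m - 1) (2 * k + 1)) ^ 2 ≤ 8 * (k + 1) := by
  have hkm : (k : ℝ) + 1 ≤ m := by exact_mod_cast hk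
  have hk0 : (0 : ℝ) ≤ k := k.cast_nonneg
  rw [pi_sq_mul_ptildeSqZ_odd_sq hk]
  set R := ((m : ℝ) - 1 / 4) / (m - (k + 1 / 2)) * ((m - 1 / 4) / (m + (k + 1 / 2))) with hR
  have hR0 : 0 ≤ R :=
    mul_nonneg (div_nonneg (by linarith) (by linarith)) (div_nonneg (by linarith) (by linarith))
  have hR8 : R * 2 * 2 ≤ 8 * (k + 1) := by
    rw [hR, div_mul_div_comm, mul_assoc, div_mul_eq_mul_div, div_le_iff₀ (by nlinarith)]
    nlinarith [mul_nonneg hk0 (sub_nonneg.2 hkm),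
      mul_nonneg (mul_nonneg hk0 hk0) (sub_nonneg.2 hkm)]
  refine le_trans ?_ hR8
  gcongr <;> first | exact hR0 | exact pi_mul_wallisRatio_sq_le_two _

theorem tendsto_pi_sq_mul_ptildeSqZ_odd (k : ℕ) :
    Tendsto (fun m : ℕ => π ^ 2 * ptildeSqZ (2 * m - 1) (2 * k + 1)) atTop (𝓝 1) := by
  have hsq :
      Tendsto (fun m : ℕ => (π ^ 2 * ptildeSqZ (2 * m - 1) (2 * k + 1)) ^ 2) atTop (𝓝 1) := by
    have h₁ :
        Tendsto (fun m : ℕ => ((m : ℝ) - 1 / 4) / (m - (k + 1 / 2))) atTop (𝓝 1) := by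
      simpa [sub_eq_add_neg] using tendsto_natCast_add_div_add (-(1 / 4)) (-(k + 1 / 2))
    have h₂ :
        Tendsto (fun m : ℕ => ((m : ℝ) - 1 / 4) / (m + (k + 1 / 2))) atTop (𝓝 1) := by
      simpa [sub_eq_add_neg] using tendsto_natCast_add_div_add (-(1 / 4)) (k + 1 / 2)
    have h₃ := tendsto_pi_mul_wallisRatio_sq.comp (tendsto_sub_atTop_nat (k + 1))
    have h₄ := tendsto_pi_mul_wallisRatio_sq.comp (tendsto_add_atTop_nat k)
    simpa using (((h₁.mul h₂).mul h₃).mul h₄).congr'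
      ((eventually_gt_atTop k).mono fun m hm => (pi_sq_mul_ptildeSqZ_odd_sq hm).symm)
  simpa [Real.sqrt_sq (mul_nonneg (sq_nonneg π) (ptildeSqZ_nonneg _ _))] using hsq.sqrt

theorem sArc_neg (j : ℤ) (ψ : ℝ) : sArc (-j) ψ = sArc j ψ := by
  unfold sArc
  split_ifs with h₁ h₂ h₂
  · rfl
  · omega
  · omega
  · push_cast
    rw [neg_mul, sin_neg, mul_neg, neg_div_neg_eq]

theorem muSq_odd {m : ℕ} (hm : m ≠ 0) (ψ : ℝ) :
    (4 * (m : ℝ) - 1) / 4 * muSq (2 * m - 1) ψ =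
      ∑ k ∈ range m, π ^ 2 * ptildeSqZ (2 * m - 1) (2 * k + 1) *
        (16 * sin ((2 * k + 1) * ψ) ^ 2 / (2 * k + 1) ^ 2) := by
  obtain ⟨m, rfl⟩ := Nat.exists_eq_succ_of_ne_zero hm
  set F : ℤ → ℝ := fun j => ptildeSqZ (2 * (m + 1) - 1) j * sArc j ψ ^ 2 with hF
  have hFeven : Function.Even F := fun j => by simp only [hF, ptildeSqZ_neg, sArc_neg]
  have hFodd (j : ℤ) (hj : Even j) : F j = 0 := by
    have hodd : ¬ Even (((2 * (m + 1) - 1 : ℕ) : ℤ) + j) := by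
      obtain ⟨r, rfl⟩ := hj
      rintro ⟨s, hs⟩
      omega
    simp only [hF, ptildeSqZ, if_neg hodd, zero_mul]
  have hsum :
      ∑ j ∈ Icc (-((2 * (m + 1) - 1 : ℕ) : ℤ)) ((2 * (m + 1) - 1 : ℕ) : ℤ), F j =
        2 * ∑ k ∈ range (m + 1), F (2 * k + 1) := by
    have hg (i : ℕ) (hi : Odd i) : F (i + 1) = 0 := by
      obtain ⟨r, rfl⟩ := hi
      exact hFodd _ ⟨r + 1, by push_cast; ring⟩
    have hext :
        ∑ i ∈ range (2 * m + 1), F (i + 1) = ∑ i ∈ range (2 * (m + 1)), F (i + 1) := by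
      rw [show 2 * (m + 1) = 2 * m + 1 + 1 by ring, sum_range_succ _ (2 * m + 1),
        hg _ (odd_two_mul_add_one m), add_zero]
    rw [sum_Icc_neg_of_even hFeven, hFodd 0 Even.zero, zero_add, nsmul_eq_mul, Nat.cast_ofNat,
      show 2 * (m + 1) - 1 = 2 * m + 1 by omega, hext, sum_range_two_mul_of_odd_eq_zero hg]
    push_cast
    rfl
  have hmu : muSq (2 * (m + 1) - 1) ψ =
      8 * π ^ 2 / (2 * ((2 * (m + 1) - 1 : ℕ) : ℝ) + 1) *
        ∑ j ∈ Icc (-((2 * (m + 1) - 1 : ℕ) : ℤ)) ((2 * (m + 1) - 1 : ℕ) : ℤ), F j := rfl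
  rw [hmu, hsum, mul_sum, mul_sum, mul_sum]
  refine sum_congr rfl fun k _ => ?_
  have h2k : (2 * (k : ℝ) + 1) ≠ 0 := by positivity
  simp only [hF, sArc, if_neg (by omega : (2 * (k : ℤ) + 1) ≠ 0)]
  push_cast [show 2 * (m + 1) - 1 = 2 * m + 1 by omega]
  field_simp
  ring

/-- `π² |P̃_{2m-1}^{2k+1}(0)|²`, extended by zero beyond the range `k < m` of the sum. -/
noncomputable def oddCoeff (m k : ℕ) : ℝ :=
  if k < m then π ^ 2 * ptildeSqZ (2 * m - 1) (2 * k + 1) else 0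

theorem tendsto_oddCoeff (k : ℕ) : Tendsto (oddCoeff · k) atTop (𝓝 1) :=
  (tendsto_pi_sq_mul_ptildeSqZ_odd k).congr'
    ((eventually_gt_atTop k).mono fun _ hm => (if_pos hm).symm)

theorem abs_oddCoeff_le (m k : ℕ) : |oddCoeff m k| ≤ √(8 * (k + 1)) := by
  unfold oddCoeff
  split_ifs with hk
  · exact Real.abs_le_sqrt (pi_sq_mul_ptildeSqZ_odd_sq_le hk)
  · simp

theorem muSq_odd_eq_tsum {m : ℕ} (hm : m ≠ 0) (ψ : ℝ) :
    (4 * (m : ℝ) - 1) / 4 * muSq (2 * m - 1) ψ =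
      ∑' k : ℕ, oddCoeff m k * (16 * sin ((2 * k + 1) * ψ) ^ 2 / (2 * k + 1) ^ 2) := by
  rw [muSq_odd hm, tsum_eq_sum (s := range m) fun k hk => by
    rw [oddCoeff, if_neg (by simpa using hk), zero_mul]]
  exact sum_congr rfl fun k hk => by rw [oddCoeff, if_pos (mem_range.1 hk)]

theorem muSq_odd_limit :
    TendstoUniformlyOn
      (fun (m : ℕ) (ψ : ℝ) => (4 * (m : ℝ) - 1) / 4 * muSq (2 * m - 1) ψ)
      (fun ψ : ℝ =>
        if ψ ≤ Real.pi / 2 then 4 * Real.pi * ψ else 4 * Real.pi ^ 2 - 4 * Real.pi * ψ)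
      atTop (Set.Icc 0 Real.pi) := by
  have hbound (k : ℕ) (ψ : ℝ) :
      |16 * sin ((2 * k + 1) * ψ) ^ 2 / (2 * k + 1) ^ 2| ≤ 16 / (2 * (k : ℝ) + 1) ^ 2 := by
    rw [abs_of_nonneg (by positivity)]
    gcongr
    exact mul_le_of_le_one_right (by norm_num) (sin_sq_le_one _)
  have h := tendstoUniformly_tsum_mul_of_tendsto_one summable_inv_odd_sq
    summable_sqrt_mul_inv_odd_sq (fun k => by positivity) hbound abs_oddCoeff_le tendsto_oddCoeff
  refine (h.tendstoUniformlyOn.congr ?_).congr_right fun ψ hψ => (hasSum_sin_odd_sq hψ).tsum_eq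
  filter_upwards [eventually_ne_atTop 0] with m hm ψ _
  exact (muSq_odd_eq_tsum hm ψ).symm
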